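/- Let A be a real fermionic Novikov algebra with an invariant Lorentzian (signature (n-1,1)) non-degenerate symmetric bilinear form. Then either A·A = 0, or dim(A·A) = 1 and there exist elements such that the product is given on a suitable basis e₁,…,eₙ by exactly one of: e₁e₁ = e₂, or e₁e₂ = e₂, or e₁e₃ = e₂, with all other products of basis vectors zero. -/

import Mathlib

/-!
Fermionicity gives `(xy)y = 0`, so by invariance `⟨yx, zx⟩ = 0` and `⟨yx, zw⟩ = -⟨yw, zx⟩`.
In Lorentzian signature the form is positive definite on the hyperplane of vectors with zero time
coordinate, hence two orthogonal isotropic vectors are proportional. Starting from a nonzero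
product `e = ab`, this forces every product onto the isotropic line `ℝe`, and invariance then
gives `xy = ⟨e, x⟩ ψ(y) e` for a linear form `ψ`. The three normal forms correspond to `ψ` being
proportional to `⟨e, ·⟩`, independent of it with `ψ(e) = 0`, or independent with `ψ(e) ≠ 0`; in
each case the functionals involved are the first coordinate functions of a basis through `e`.
-/

open Module Submodule

section DualFamily

variable {K V : Type*} [Field K] [AddCommGroup V] [Module K V]

theorem LinearIndependent.surjective_pi {ι : Type*} [Fintype ι] [DecidableEq ι]
    {f : ι → Dual K V} (hf : LinearIndependent K f) : Function.Surjective (LinearMap.pi f) := by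
  rw [← LinearMap.dualMap_injective_iff, injective_iff_map_eq_zero]
  intro g hg
  have hsum : ∑ i, g (Pi.single i 1) • f i = 0 := by
    ext x
    have hgx := LinearMap.congr_fun hg x
    rw [LinearMap.dualMap_apply, LinearMap.pi_apply_eq_sum_univ g] at hgx
    simpa [mul_comm, ← Pi.single_apply, Pi.single_comm] using hgx
  exact (Pi.basisFun K ι).ext fun i => by
    simpa using Fintype.linearIndependent_iff.mp hf _ hsum i

theorem LinearIndependent.of_apply_eq_single_of_succAbove {k : ℕ} {f : Fin (k + 1) → Dual K V}
    {t : Fin (k + 1)} {e : V} (he : ∀ l, f l e = (Pi.single t 1 : Fin (k + 1) → K) l)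
    (hf : LinearIndependent K (f ∘ t.succAbove)) : LinearIndependent K f := by
  rw [Fintype.linearIndependent_iff] at hf ⊢
  intro g hg
  rw [Fin.sum_univ_succAbove _ t] at hg
  have ht : g t = 0 := by
    simpa [he, Fin.succAbove_ne] using LinearMap.congr_fun hg e
  rw [ht, zero_smul, zero_add] at hg
  intro l
  rcases Fin.eq_self_or_eq_succAbove t l with rfl | ⟨i, rfl⟩
  · exact ht
  · exact hf (g ∘ t.succAbove) hg i

theorem linearIndependent_sumElim_ker_pi {ι : Type*} [Fintype ι] [DecidableEq ι]
    {f : ι → Dual K V} {v : ι → V} (hv : ∀ i j, f i (v j) = (Pi.single j 1 : ι → K) i)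
    {m : ℕ} (w : Basis (Fin m) K (LinearMap.ker (LinearMap.pi f))) :
    LinearIndependent K (Sum.elim v ((LinearMap.ker (LinearMap.pi f)).subtype ∘ w)) := by
  have hfw : ∀ i l, f i (w l) = 0 := fun i l => congr_fun (w l).2 i
  rw [Fintype.linearIndependent_iff]
  intro g hg
  rw [Fintype.sum_sum_type] at hg
  have hinl : ∀ i, g (.inl i) = 0 := fun i => by
    simpa [hv, hfw, Pi.single_apply] using congr_arg (f i) hg
  have hinr : ∑ l, g (.inr l) • w l = 0 := by
    apply Subtype.ext
    simpa [hinl] using hg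
  rintro (i | l)
  · exact hinl i
  · exact Fintype.linearIndependent_iff.mp w.linearIndependent _ hinr l

theorem exists_basis_coord_eq [FiniteDimensional K V] {k n : ℕ} (hn : finrank K V = n)
    {f : Fin k → Dual K V} (hf : LinearIndependent K f) {t : Fin k} {e : V}
    (he : ∀ i, f i e = (Pi.single t 1 : Fin k → K) i) :
    ∃ (hk : k ≤ n) (b : Basis (Fin n) K V),
      (∀ i, b.coord (Fin.castLE hk i) = f i) ∧ b (Fin.castLE hk t) = e := by
  set T := LinearMap.pi f
  choose x hx using hf.surjective_pi
  -- `v` is dual to `f` and passes through `e`; completing it by a basis of `ker T` gives `b`.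
  set v : Fin k → V := Function.update (fun j => x (Pi.single j 1)) t e
  have hv : ∀ i j, f i (v j) = (Pi.single j 1 : Fin k → K) i := by
    intro i j
    rcases eq_or_ne j t with rfl | hj
    · simp [v, he, Pi.single_apply]
    · simp only [v, Function.update_of_ne hj]
      exact congr_fun (hx _) i
  have hcard : k + finrank K (LinearMap.ker T) = n := by
    have := LinearMap.finrank_range_add_finrank_ker T
    rw [LinearMap.range_eq_top.mpr hf.surjective_pi, finrank_top, finrank_fin_fun] at this
    omega
  set w := finBasis K (LinearMap.ker T)
  obtain ⟨b₁, hb₁⟩ : ∃ b₁ : Basis _ K V, ⇑b₁ = Sum.elim v ((LinearMap.ker T).subtype ∘ w) :=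
    ⟨_, coe_basisOfLinearIndependentOfCardEqFinrank' _ (linearIndependent_sumElim_ker_pi hv w)
      (by simp [hcard, hn])⟩
  set ι := finSumFinEquiv.trans (finCongr hcard)
  have hk : k ≤ n := by omega
  have hι : ∀ i, ι.symm (Fin.castLE hk i) = .inl i := fun i => by
    rw [Equiv.symm_apply_eq]; exact Fin.ext (by simp [ι])
  refine ⟨hk, b₁.reindex ι, fun i => b₁.ext fun s => ?_, ?_⟩
  · rw [Basis.coord_apply, Basis.repr_reindex_apply, hι, b₁.repr_self, hb₁]
    rcases s with j | l
    · simp [hv, Finsupp.single_apply, Pi.single_apply, eq_comm]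
    · rw [Finsupp.single_apply, if_neg Sum.inr_ne_inl]
      exact (congr_fun (w l).2 i).symm
  · rw [Basis.reindex_apply, hι, hb₁]
    simp [v]

end DualFamily

section Lorentzian

variable {K A : Type*} [Field K] [LinearOrder K] [IsStrictOrderedRing K] [AddCommGroup A]
  [Module K A] {n : ℕ} {B : A →ₗ[K] A →ₗ[K] K} {b₀ : Basis (Fin n) K A}

theorem apply_self_eq_sum_of_orthogonal_basis
    (hdiag : ∀ i : Fin n, B (b₀ i) (b₀ i) = if (i : ℕ) < 1 then -1 else 1)
    (horth : ∀ i j : Fin n, i ≠ j → B (b₀ i) (b₀ j) = 0) (u : A) :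
    B u u = ∑ i : Fin n, (if (i : ℕ) < 1 then -1 else 1) * b₀.repr u i ^ 2 := by
  rw [← LinearMap.sum_repr_mul_repr_mul b₀ b₀ u u (B := B), Finsupp.sum_fintype _ _ (by simp)]
  refine Finset.sum_congr rfl fun i _ => ?_
  rw [Finsupp.sum_fintype _ _ (by simp), Finset.sum_eq_single i
    (fun j _ hj => by simp [horth i j hj.symm]) (by simp), hdiag]
  simp only [smul_eq_mul]; ring

theorem eq_zero_of_isotropic_of_repr_timelike_eq_zero
    (hdiag : ∀ i : Fin n, B (b₀ i) (b₀ i) = if (i : ℕ) < 1 then -1 else 1)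
    (horth : ∀ i j : Fin n, i ≠ j → B (b₀ i) (b₀ j) = 0) {u : A} (hu : B u u = 0)
    (h0 : ∀ i : Fin n, (i : ℕ) < 1 → b₀.repr u i = 0) : u = 0 := by
  have hsq : ∑ i, b₀.repr u i ^ 2 = 0 := by
    rw [apply_self_eq_sum_of_orthogonal_basis hdiag horth] at hu
    rw [← hu]
    refine Finset.sum_congr rfl fun i _ => ?_
    split_ifs with hi
    · simp [h0 i hi]
    · ring
  have hrepr : ∀ i, b₀.repr u i = 0 := fun i =>
    pow_eq_zero_iff two_ne_zero |>.mp <|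
      (Finset.sum_eq_zero_iff_of_nonneg fun j _ => sq_nonneg _).mp hsq i (Finset.mem_univ i)
  exact b₀.ext_elem fun i => by simp [hrepr]

theorem mem_span_singleton_of_isotropic
    (hdiag : ∀ i : Fin n, B (b₀ i) (b₀ i) = if (i : ℕ) < 1 then -1 else 1)
    (horth : ∀ i j : Fin n, i ≠ j → B (b₀ i) (b₀ j) = 0) (hsymm : ∀ u v : A, B u v = B v u)
    {u v : A} (hu0 : u ≠ 0) (hu : B u u = 0) (hv : B v v = 0) (huv : B u v = 0) :
    v ∈ span K {u} := by
  obtain ⟨i, hi, hui⟩ : ∃ i : Fin n, (i : ℕ) < 1 ∧ b₀.repr u i ≠ 0 := by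
    by_contra! h
    exact hu0 (eq_zero_of_isotropic_of_repr_timelike_eq_zero hdiag horth hu h)
  have hw : b₀.repr u i • v - b₀.repr v i • u = 0 := by
    refine eq_zero_of_isotropic_of_repr_timelike_eq_zero hdiag horth ?_ fun j hj => ?_
    · simp only [map_sub, map_smul, LinearMap.sub_apply, LinearMap.smul_apply, smul_eq_mul, hu,
        hv, huv, hsymm v u]
      ring
    · obtain rfl : j = i := Fin.ext (by omega)
      simp [mul_comm]
  rw [mem_span_singleton]
  exact ⟨(b₀.repr u i)⁻¹ * b₀.repr v i, by
    rw [mul_smul, ← sub_eq_zero.mp hw, smul_smul, inv_mul_cancel₀ hui, one_smul]⟩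

end Lorentzian

section InvariantForm

variable {K A : Type*} [Field K] [AddCommGroup A] [Module K A] {mul : A →ₗ[K] A →ₗ[K] A}
  {B : A →ₗ[K] A →ₗ[K] K}

theorem mul_mul_self_right_eq_zero [NeZero (2 : K)]
    (hferm : ∀ x y z : A, mul (mul x y) z = -mul (mul x z) y) (x y : A) :
    mul (mul x y) y = 0 := by
  have h2 : (2 : K) • mul (mul x y) y = 0 := by
    rw [two_smul]
    nth_rewrite 2 [hferm]
    exact add_neg_cancel _
  exact (smul_eq_zero.mp h2).resolve_left two_ne_zero

theorem apply_mul_mul_eq_neg (hferm : ∀ x y z : A, mul (mul x y) z = -mul (mul x z) y)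
    (hinv : ∀ x y z : A, B (mul y x) z = B y (mul z x)) (w x y z : A) :
    B (mul y x) (mul z w) = -B (mul y w) (mul z x) := by
  rw [hinv, hferm, map_neg, ← hinv]

theorem apply_mul_mul_same_right_eq_zero [NeZero (2 : K)]
    (hferm : ∀ x y z : A, mul (mul x y) z = -mul (mul x z) y)
    (hinv : ∀ x y z : A, B (mul y x) z = B y (mul z x)) (x y z : A) :
    B (mul y x) (mul z x) = 0 := by
  rw [hinv, mul_mul_self_right_eq_zero hferm, map_zero]

theorem exists_mul_eq_smul_of_mem_span_singleton (hsymm : ∀ u v : A, B u v = B v u)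
    (hnondeg : ∀ v : A, (∀ w : A, B v w = 0) → v = 0)
    (hinv : ∀ x y z : A, B (mul y x) z = B y (mul z x)) {e : A} (he : e ≠ 0)
    (hspan : ∀ x y, mul x y ∈ span K {e}) :
    ∃ ψ : Dual K A, ∀ x y, mul x y = (B e x * ψ y) • e := by
  obtain ⟨ℓ, hℓ⟩ := Projective.exists_dual_eq_one K he
  have hmul : ∀ x y, mul x y = ℓ (mul x y) • e := fun x y => by
    obtain ⟨c, hc⟩ := mem_span_singleton.mp (hspan x y)
    simp [← hc, hℓ]
  obtain ⟨z, hz⟩ : ∃ z, B e z ≠ 0 := by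
    by_contra! h
    exact he (hnondeg e h)
  refine ⟨(B e z)⁻¹ • ℓ ∘ₗ mul z, fun x y => ?_⟩
  have hxyz : ℓ (mul x y) * B e z = ℓ (mul z y) * B e x := by
    have := hinv y x z
    rw [hmul x y, hmul z y, hsymm x] at this
    simpa using this
  rw [hmul x y, LinearMap.smul_apply, LinearMap.comp_apply, smul_eq_mul]
  congr 1
  field_simp
  linear_combination hxyz

end InvariantForm

theorem mul_mem_span_singleton_mul {K A : Type*} [Field K] [LinearOrder K]
    [IsStrictOrderedRing K] [AddCommGroup A] [Module K A] {n : ℕ} {mul : A →ₗ[K] A →ₗ[K] A}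
    {B : A →ₗ[K] A →ₗ[K] K} {b₀ : Basis (Fin n) K A}
    (hdiag : ∀ i : Fin n, B (b₀ i) (b₀ i) = if (i : ℕ) < 1 then -1 else 1)
    (horth : ∀ i j : Fin n, i ≠ j → B (b₀ i) (b₀ j) = 0) (hsymm : ∀ u v : A, B u v = B v u)
    (hferm : ∀ x y z : A, mul (mul x y) z = -mul (mul x z) y)
    (hinv : ∀ x y z : A, B (mul y x) z = B y (mul z x)) {a b : A} (hab : mul a b ≠ 0)
    (x y : A) : mul x y ∈ span K {mul a b} := by
  have hiso : ∀ x y, B (mul x y) (mul x y) = 0 := fun x y =>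
    apply_mul_mul_same_right_eq_zero hferm hinv y x x
  -- `⟨ab, zx⟩ = -⟨ax, zb⟩`, where `zb` is proportional to `ab` and `ax ⊥ ab`.
  have hperp : ∀ z x, B (mul a b) (mul z x) = 0 := by
    intro z x
    obtain ⟨t, ht⟩ := mem_span_singleton.mp <| mem_span_singleton_of_isotropic hdiag horth hsymm
      hab (hiso a b) (hiso z b) (apply_mul_mul_same_right_eq_zero hferm hinv b a z)
    have hax : B (mul a x) (mul a b) = 0 := by
      have := apply_mul_mul_eq_neg hferm hinv b x a a
      rw [hsymm (mul a b)] at this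
      linarith
    rw [apply_mul_mul_eq_neg hferm hinv x b a z, ← ht, map_smul, hax, smul_zero, neg_zero]
  exact mem_span_singleton_of_isotropic hdiag horth hsymm hab (hiso a b) (hiso x y) (hperp x y)

theorem finrank_span_mul_eq_one {K A : Type*} [Field K] [AddCommGroup A] [Module K A]
    {mul : A →ₗ[K] A →ₗ[K] A} {a b : A} (hab : mul a b ≠ 0)
    (hspan : ∀ x y, mul x y ∈ span K {mul a b}) :
    finrank K (span K {w : A | ∃ a b : A, w = mul a b}) = 1 := by
  have : span K {w : A | ∃ a b : A, w = mul a b} = span K {mul a b} :=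
    le_antisymm (span_le.mpr <| by rintro _ ⟨x, y, rfl⟩; exact hspan x y)
      (span_mono <| Set.singleton_subset_iff.mpr ⟨a, b, rfl⟩)
  rw [this, finrank_span_singleton hab]

section NormalForm

variable {K A : Type*} [Field K] [AddCommGroup A] [Module K A] [FiniteDimensional K A] {n : ℕ}
  {mul : A →ₗ[K] A →ₗ[K] A}

theorem exists_basis_mul_eq_coord_mul_coord (hn : finrank K A = n) {k : ℕ}
    {f : Fin k → Dual K A} (hf : LinearIndependent K f) {i j t : Fin k} {e : A}
    (he : ∀ l, f l e = (Pi.single t 1 : Fin k → K) l)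
    (hmul : ∀ x y, mul x y = (f i x * f j y) • e) :
    ∃ (hk : k ≤ n) (b : Basis (Fin n) K A), ∀ x y,
      mul x y =
        (b.repr x (Fin.castLE hk i) * b.repr y (Fin.castLE hk j)) • b (Fin.castLE hk t) := by
  obtain ⟨hk, b, hcoord, hbt⟩ := exists_basis_coord_eq hn hf he
  exact ⟨hk, b, fun x y => by simp only [← b.coord_apply, hcoord, hbt, hmul]⟩

theorem exists_normal_form_basis (hn : finrank K A = n) {φ ψ : Dual K A} {e : A}
    (he : e ≠ 0) (hφe : φ e = 0) (hφ : φ ≠ 0) (hψ : ψ ≠ 0)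
    (hmul : ∀ x y, mul x y = (φ x * ψ y) • e) :
    ∃ b : Basis (Fin n) K A,
        (∃ h : 2 ≤ n, ∀ x y : A,
          mul x y = (b.repr x ⟨0, by omega⟩ * b.repr y ⟨0, by omega⟩) • b ⟨1, by omega⟩) ∨
        (∃ h : 2 ≤ n, ∀ x y : A,
          mul x y = (b.repr x ⟨0, by omega⟩ * b.repr y ⟨1, by omega⟩) • b ⟨1, by omega⟩) ∨
        (∃ h : 3 ≤ n, ∀ x y : A,
          mul x y = (b.repr x ⟨0, by omega⟩ * b.repr y ⟨2, by omega⟩) • b ⟨1, by omega⟩) := by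
  by_cases hdep : ∃ c : K, c • φ = ψ
  · obtain ⟨c, rfl⟩ := hdep
    have hc : c ≠ 0 := by rintro rfl; simp at hψ
    obtain ⟨χ, hχ⟩ := Projective.exists_dual_eq_one K (smul_ne_zero hc he)
    have hdual : ∀ l, ![φ, χ] l (c • e) = (Pi.single 1 1 : Fin 2 → K) l := fun l => by
      fin_cases l <;> simp [hφe, hχ]
    have hli : LinearIndependent K ![φ, χ] :=
      .of_apply_eq_single_of_succAbove hdual (by simpa [linearIndependent_unique_iff] using hφ)
    obtain ⟨hk, b, hb⟩ :=
      exists_basis_mul_eq_coord_mul_coord (mul := mul) hn hli (i := 0) (j := 0) hdual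
      fun x y => by simp [hmul, smul_smul, mul_assoc, mul_comm c]
    exact ⟨b, .inl ⟨hk, hb⟩⟩
  push Not at hdep
  by_cases hψe : ψ e = 0
  · obtain ⟨χ, hχ⟩ := Projective.exists_dual_eq_one K he
    have hdual : ∀ l, ![φ, χ, ψ] l e = (Pi.single 1 1 : Fin 3 → K) l := fun l => by
      fin_cases l <;> simp [hφe, hχ, hψe]
    have hli : LinearIndependent K ![φ, χ, ψ] :=
      .of_apply_eq_single_of_succAbove hdual <| by
        rw [show ![φ, χ, ψ] ∘ Fin.succAbove 1 = ![φ, ψ] by ext l; fin_cases l <;> rfl]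
        exact (LinearIndependent.pair_iff' hφ).mpr hdep
    obtain ⟨hk, b, hb⟩ :=
      exists_basis_mul_eq_coord_mul_coord (mul := mul) hn hli (i := 0) (j := 2) hdual
      fun x y => by simp [hmul]
    exact ⟨b, .inr <| .inr ⟨hk, hb⟩⟩
  · have hdual : ∀ l, ![ψ e • φ, ψ] l ((ψ e)⁻¹ • e) = (Pi.single 1 1 : Fin 2 → K) l :=
      fun l => by fin_cases l <;> simp [hφe, hψe]
    have hli : LinearIndependent K ![ψ e • φ, ψ] :=
      (LinearIndependent.pair_iff' (smul_ne_zero hψe hφ)).mpr fun a => by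
        rw [smul_smul]; exact hdep _
    obtain ⟨hk, b, hb⟩ :=
      exists_basis_mul_eq_coord_mul_coord (mul := mul) hn hli (i := 0) (j := 1) hdual
      fun x y => by simp [hmul, smul_smul]; field_simp
    exact ⟨b, .inr <| .inl ⟨hk, hb⟩⟩

end NormalForm

/-- A real fermionic Novikov algebra with an invariant Lorentzian (signature `(n-1,1)`)
non-degenerate symmetric bilinear form has either zero product, or `dim(A·A) = 1` with the
product given on a suitable basis `e₁,…,eₙ` by exactly one of `e₁e₁ = e₂`, `e₁e₂ = e₂`,
`e₁e₃ = e₂` (all other products of basis vectors zero). -/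
theorem stmt_19 {A : Type*} [AddCommGroup A] [Module ℝ A]
    {n : ℕ}
    (mul : A →ₗ[ℝ] A →ₗ[ℝ] A)
    (hferm : ∀ x y z : A, mul (mul x y) z = - mul (mul x z) y)
    (B : A →ₗ[ℝ] A →ₗ[ℝ] ℝ)
    (hsymm : ∀ u v : A, B u v = B v u)
    (hnondeg : ∀ v : A, (∀ w : A, B v w = 0) → v = 0)
    (hinv : ∀ x y z : A, B (mul y x) z = B y (mul z x))
    (b₀ : Module.Basis (Fin n) ℝ A)
    (hdiag : ∀ i : Fin n, B (b₀ i) (b₀ i) = if (i : ℕ) < 1 then -1 else 1)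
    (horth : ∀ i j : Fin n, i ≠ j → B (b₀ i) (b₀ j) = 0) :
    (∀ x y : A, mul x y = 0) ∨
    (Module.finrank ℝ (Submodule.span ℝ {w : A | ∃ a b : A, w = mul a b}) = 1 ∧
      ∃ b : Module.Basis (Fin n) ℝ A,
        (∃ h : 2 ≤ n, ∀ x y : A,
          mul x y = (b.repr x ⟨0, by omega⟩ * b.repr y ⟨0, by omega⟩) • b ⟨1, by omega⟩) ∨
        (∃ h : 2 ≤ n, ∀ x y : A,
          mul x y = (b.repr x ⟨0, by omega⟩ * b.repr y ⟨1, by omega⟩) • b ⟨1, by omega⟩) ∨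
        (∃ h : 3 ≤ n, ∀ x y : A,
          mul x y = (b.repr x ⟨0, by omega⟩ * b.repr y ⟨2, by omega⟩) • b ⟨1, by omega⟩)) := by
  have := Module.Finite.of_basis b₀
  by_cases hzero : ∀ x y : A, mul x y = 0
  · exact .inl hzero
  push Not at hzero
  obtain ⟨a, b, hab⟩ := hzero
  have hspan := mul_mem_span_singleton_mul hdiag horth hsymm hferm hinv hab
  obtain ⟨ψ, hψ⟩ := exists_mul_eq_smul_of_mem_span_singleton hsymm hnondeg hinv hab hspan
  have hφ : B (mul a b) ≠ 0 := fun h => hab (by rw [hψ, h]; simp)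
  have hψ0 : ψ ≠ 0 := fun h => hab (by rw [hψ, h]; simp)
  refine .inr ⟨finrank_span_mul_eq_one hab hspan, exists_normal_form_basis
    (finrank_eq_card_basis b₀ |>.trans (Fintype.card_fin n)) hab ?_ hφ hψ0 hψ⟩
  exact apply_mul_mul_same_right_eq_zero hferm hinv b a a
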